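/- arXiv:2604.03597 — 2 statements merged into one kernel-verified Lean document; each statement's English description precedes it below -/
import Mathlib

section
/- Let (Eₙ), (rₙ), (Qₙ) be real sequences with E_{n+1} - (Eₙ + rₙ) + Q_{n+1} = 0 and r_{n+1} = min(Q_{n+1}, 0) for all n, and r₀ = 0; let C₀ be a constant, set Ẽₙ = Eₙ + C₀, and suppose Ẽ₀ + r₀ > 0 and Ẽₙ > 0 for all n. Then for all n: (i) Ẽₙ + rₙ > 0, (ii) Ẽₙ + rₙ ≤ Ẽ₀, and (iii) the ratio ξₙ = (Ẽₙ + rₙ)/Ẽₙ satisfies 0 ≤ ξₙ ≤ 1. -/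
theorem stmt_3 (E r Q : ℕ → ℝ) (C₀ : ℝ)
    (hbal : ∀ n, E (n + 1) - (E n + r n) + Q (n + 1) = 0)
    (hupd : ∀ n, r (n + 1) = min (Q (n + 1)) 0)
    (hr0 : r 0 = 0)
    (hEt : ∀ n, 0 < E n + C₀)
    (hinit : 0 < E 0 + C₀ + r 0) :
    ∀ n, 0 < E n + C₀ + r n ∧ E n + C₀ + r n ≤ E 0 + C₀ ∧
      0 ≤ (E n + C₀ + r n) / (E n + C₀) ∧ (E n + C₀ + r n) / (E n + C₀) ≤ 1 := by
  have hr : ∀ n, r n ≤ 0 := by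
    intro n
    cases n with
    | zero => simp [hr0]
    | succ k => rw [hupd k]; exact min_le_right _ _
  have key : ∀ n, 0 < E n + C₀ + r n ∧ E n + C₀ + r n ≤ E 0 + C₀ := by
    intro n
    induction n with
    | zero => exact ⟨hinit, by simp [hr0]⟩
    | succ k ih =>
      have hb := hbal k
      have hE1 : E (k+1) = E k + r k - Q (k+1) := by linarith
      rcases le_or_gt 0 (Q (k+1)) with hq | hq
      · have hrk : r (k+1) = 0 := by rw [hupd k]; simp [min_eq_right, hq]
        constructor
        · rw [hrk]; simpa using hEt (k+1)
        · rw [hrk, hE1]; linarith [ih.2]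
      · have hrk : r (k+1) = Q (k+1) := by rw [hupd k]; exact min_eq_left hq.le
        constructor
        · rw [hrk, hE1]; linarith [ih.1]
        · rw [hrk, hE1]; linarith [ih.2]
  intro n
  obtain ⟨h1, h2⟩ := key n
  refine ⟨h1, h2, div_nonneg h1.le (hEt n).le, ?_⟩
  rw [div_le_one (hEt n)]
  linarith [hr n]
end

section
/- Let H be a real Hilbert space and let Δ be a symmetric negative semidefinite linear operator on H. For the midpoint scheme, if (φ_{n+1} - φₙ)/Δt = Δμ and μ = -ε²Δφ^{n+1/2} + λφ^{n+1/2} + g, where φ^{n+1/2} = (φ_{n+1}+φₙ)/2, then taking inner products yields (λ/2)(‖φ_{n+1}‖² - ‖φₙ‖²) + (ε²/2)(⟪-Δφ_{n+1},φ_{n+1}⟫ - ⟪-Δφₙ,φₙ⟫) + ⟪g, φ_{n+1} - φₙ⟫ = Δt·⟪μ, Δμ⟫ ≤ 0, together with the sign condition ⟪μ,Δμ⟫ ≤ 0. -/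
open RealInnerProductSpace

theorem stmt_7 {H : Type*} [NormedAddCommGroup H] [InnerProductSpace ℝ H]
    [CompleteSpace H]
    (D : H →ₗ[ℝ] H) (hDsym : ∀ x y : H, ⟪D x, y⟫ = ⟪x, D y⟫)
    (hDneg : ∀ x : H, ⟪x, D x⟫ ≤ 0)
    (Δt ε l : ℝ) (hΔt : 0 < Δt) (hε : 0 < ε) (hl : 0 < l)
    (φn φn1 g μ φh : H)
    (hφh : φh = (2 : ℝ)⁻¹ • (φn + φn1))
    (hscheme1 : Δt⁻¹ • (φn1 - φn) = D μ)
    (hscheme2 : μ = -(ε ^ 2) • D φh + l • φh + g) :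
    l / 2 * (‖φn1‖ ^ 2 - ‖φn‖ ^ 2)
      + ε ^ 2 / 2 * (⟪-D φn1, φn1⟫ - ⟪-D φn, φn⟫)
      + ⟪g, φn1 - φn⟫ = Δt * ⟪μ, D μ⟫ ∧ ⟪μ, D μ⟫ ≤ 0 := by
  have h1 : φn1 - φn = Δt • D μ := by
    rw [← hscheme1, smul_smul, mul_inv_cancel₀ hΔt.ne', one_smul]
  refine ⟨?_, hDneg μ⟩
  have key : ⟪μ, φn1 - φn⟫ = Δt * ⟪μ, D μ⟫ := by
    rw [h1, real_inner_smul_right]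
  rw [← key, hscheme2, hφh]
  have hsym : ⟪D φn, φn1⟫ = ⟪φn, D φn1⟫ := hDsym φn φn1
  have hc : ⟪φn, D φn1⟫ = ⟪D φn1, φn⟫ := real_inner_comm _ _
  have hnorm1 : ⟪φn1, φn1⟫ = (‖φn1‖:ℝ) ^ 2 := real_inner_self_eq_norm_sq φn1
  have hnorm0 : ⟪φn, φn⟫ = (‖φn‖:ℝ) ^ 2 := real_inner_self_eq_norm_sq φn
  have hcc : ⟪φn, φn1⟫ = ⟪φn1, φn⟫ := real_inner_comm _ _
  simp only [map_add, map_smul, inner_add_left, inner_sub_right, inner_add_right,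
    inner_smul_left, inner_smul_right, real_inner_smul_left, real_inner_smul_right,
    inner_neg_left, map_neg, neg_smul, RingHom.id_apply, smul_neg]
  simp only [starRingEnd_apply, star_trivial]
  linear_combination -(l/2) * hnorm1 + (l/2) * hnorm0 - (l/2) * hcc + (ε^2/2) * (hsym.trans hc)
end
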